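/- For any finite signed Borel measure μ on ℝ^k and t > 0, σ(μ,t) ≤ 6k · sup_{|h| ≤ t} ‖μ_h − μ‖_TV, where σ(μ,t) = sup{∫ ∂_e φ dμ : φ ∈ C₀^∞(ℝ^k), ‖φ‖_∞ ≤ t, ‖∂_e φ‖_∞ ≤ 1, |e|=1}. -/

import Mathlib

open MeasureTheory Real
noncomputable section

/-- Euclidean space ℝ^k. -/
abbrev Ek (k : ℕ) := EuclideanSpace ℝ (Fin k)

/-- Integral of a function against a finite signed measure (via Jordan decomposition). -/
def sInt {E : Type*} [MeasurableSpace E] (μ : SignedMeasure E) (φ : E → ℝ) : ℝ :=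
  ∫ x, φ x ∂μ.toJordanDecomposition.posPart - ∫ x, φ x ∂μ.toJordanDecomposition.negPart

/-- Shift of a signed measure: (shiftSM μ h) A = μ (A - h). -/
def shiftSM {E : Type*} [MeasurableSpace E] [Add E] (μ : SignedMeasure E) (h : E) :
    SignedMeasure E := μ.map (· + h)

/-- The modulus σ(μ,t) for a signed measure on ℝ^k (Definition 2.1). -/
def sigmaSM {k : ℕ} (μ : SignedMeasure (Ek k)) (t : ℝ) : ℝ :=
  sSup {r | ∃ (φ : Ek k → ℝ) (e : Ek k), ContDiff ℝ (⊤ : ℕ∞) φ ∧ HasCompactSupport φ ∧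
    ‖e‖ = 1 ∧ (∀ x, |φ x| ≤ t) ∧ (∀ x, |fderiv ℝ φ x e| ≤ 1) ∧
    r = sInt μ (fun x => fderiv ℝ φ x e)}

/-- Total variation norm of a signed measure, as a supremum over smooth test functions. -/
def tvSM {k : ℕ} (μ : SignedMeasure (Ek k)) : ℝ :=
  sSup {r | ∃ φ : Ek k → ℝ, ContDiff ℝ (⊤ : ℕ∞) φ ∧ HasCompactSupport φ ∧
    (∀ x, |φ x| ≤ 1) ∧ r = sInt μ φ}

/-- Total variation distance between two (finite) measures, sup over smooth test functions. -/
def tvDist {E : Type*} [MeasurableSpace E] [NormedAddCommGroup E] [InnerProductSpace ℝ E]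
    (μ ν : Measure E) : ℝ :=
  sSup {r | ∃ φ : E → ℝ, ContDiff ℝ (⊤ : ℕ∞) φ ∧ HasCompactSupport φ ∧
    (∀ x, |φ x| ≤ 1) ∧ r = ∫ x, φ x ∂μ - ∫ x, φ x ∂ν}

/-- Kantorovich–Rubinstein distance between two measures. -/
def krDist {E : Type*} [MeasurableSpace E] [NormedAddCommGroup E] [InnerProductSpace ℝ E]
    (μ ν : Measure E) : ℝ :=
  sSup {r | ∃ φ : E → ℝ, ContDiff ℝ (⊤ : ℕ∞) φ ∧ HasCompactSupport φ ∧
    (∀ x, |φ x| ≤ 1) ∧ (∀ x, ‖fderiv ℝ φ x‖ ≤ 1) ∧ r = ∫ x, φ x ∂μ - ∫ x, φ x ∂ν}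

/-- σ(μ − ν, t) for two measures. -/
def sigmaDiff {k : ℕ} (μ ν : Measure (Ek k)) (t : ℝ) : ℝ :=
  sSup {r | ∃ (φ : Ek k → ℝ) (e : Ek k), ContDiff ℝ (⊤ : ℕ∞) φ ∧ HasCompactSupport φ ∧
    ‖e‖ = 1 ∧ (∀ x, |φ x| ≤ t) ∧ (∀ x, |fderiv ℝ φ x e| ≤ 1) ∧
    r = ∫ x, fderiv ℝ φ x e ∂μ - ∫ x, fderiv ℝ φ x e ∂ν}

/-- σ(μ, t) for a single measure on ℝ^k. -/
def sigmaMeas {k : ℕ} (μ : Measure (Ek k)) (t : ℝ) : ℝ :=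
  sSup {r | ∃ (φ : Ek k → ℝ) (e : Ek k), ContDiff ℝ (⊤ : ℕ∞) φ ∧ HasCompactSupport φ ∧
    ‖e‖ = 1 ∧ (∀ x, |φ x| ≤ t) ∧ (∀ x, |fderiv ℝ φ x e| ≤ 1) ∧
    r = ∫ x, fderiv ℝ φ x e ∂μ}

/-- The standard Gaussian measure on ℝ^n. -/
def gaussE (n : ℕ) : Measure (Ek n) :=
  volume.withDensity (fun x => ENNReal.ofReal ((2 * π) ^ (-(n : ℝ) / 2) * exp (-‖x‖ ^ 2 / 2)))

/-- Hessian of f as a continuous linear map (the second derivative). -/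
def hess {n : ℕ} (f : Ek n → ℝ) (x : Ek n) : Ek n →L[ℝ] Ek n := fderiv ℝ (gradient f) x

/-- Hilbert–Schmidt norm of an operator on ℝ^n. -/
def hsN {n : ℕ} (A : Ek n →L[ℝ] Ek n) : ℝ :=
  Real.sqrt (∑ i, ∑ j,
    (inner ℝ (A (EuclideanSpace.single i 1)) (EuclideanSpace.single j 1) : ℝ) ^ 2)

/-- Ornstein–Uhlenbeck operator Lf = Δf − ⟨x, ∇f⟩. -/
def ouL {n : ℕ} (f : Ek n → ℝ) (x : Ek n) : ℝ :=
  (∑ i, (inner ℝ (hess f x (EuclideanSpace.single i 1)) (EuclideanSpace.single i 1) : ℝ)) -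
    (inner ℝ x (gradient f x) : ℝ)

/-- Gaussian L^p norm. -/
def lpN {X : Type*} [MeasurableSpace X] (γ : Measure X) (p : ℝ) (f : X → ℝ) : ℝ :=
  (∫ x, |f x| ^ p ∂γ) ^ (1 / p)

/-- Gaussian Sobolev W^{p,2} norm of a scalar function. -/
def wNorm {n : ℕ} (p : ℝ) (f : Ek n → ℝ) : ℝ :=
  lpN (gaussE n) p f + lpN (gaussE n) p (fun x => ‖gradient f x‖) +
    lpN (gaussE n) p (fun x => hsN (hess f x))

/-- The class C_b^∞: smooth with all derivatives bounded. -/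
def CbInf {n : ℕ} (f : Ek n → ℝ) : Prop :=
  ContDiff ℝ (⊤ : ℕ∞) f ∧ ∀ i : ℕ, ∃ C, ∀ x, ‖iteratedFDeriv ℝ i f x‖ ≤ C

/-- Malliavin matrix of a map f : ℝ^n → ℝ^k. -/
def mall {n k : ℕ} (f : Ek n → Ek k) (x : Ek n) : Matrix (Fin k) (Fin k) ℝ :=
  fun i j => (inner ℝ (gradient (fun y => f y i) x) (gradient (fun y => f y j) x) : ℝ)

/-- Malliavin determinant Δ_f. -/
def malDet {n k : ℕ} (f : Ek n → Ek k) (x : Ek n) : ℝ := (mall f x).det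

/-- u_γ(g, ε) = ∫₀^∞ (s+1)^{-2} γ(g ≤ εs) ds. -/
def uGamma {X : Type*} [MeasurableSpace X] (γ : Measure X) (g : X → ℝ) (ε : ℝ) : ℝ :=
  ∫ s in Set.Ioi (0:ℝ), (s + 1) ^ (-(2:ℝ)) * (γ {x | g x ≤ ε * s}).toReal

/-! Write `ψ = ∂ₑφ`. Integrating `s ↦ μ(ψ(· + s e))` over `[0, t]`, swapping the integrals
(Fubini) and applying the fundamental theorem of calculus along each line `s ↦ x + s e` gives

  `t · μ(ψ) = (μ_{te} − μ)(φ) − ∫₀ᵗ (μ_{se} − μ)(ψ) ds`.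

As `|φ| ≤ t` and `|ψ| ≤ 1`, each term on the right is at most `t · sup_{|h| ≤ t} ‖μ_h − μ‖_TV`,
so `μ(ψ) ≤ 2 sup_{|h| ≤ t} ‖μ_h − μ‖_TV`; and `2 ≤ 6k` because unit vectors exist only for
`k ≥ 1`. -/

section SignedIntegral

variable {E : Type*} [MeasurableSpace E]

lemma integrable_of_abs_le {m : Measure E} [IsFiniteMeasure m] {φ : E → ℝ} (hφ : Measurable φ)
    {C : ℝ} (hb : ∀ x, |φ x| ≤ C) : Integrable φ m :=
  .of_bound hφ.aestronglyMeasurable C (.of_forall hb)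

lemma sInt_eq_integral_sub_integral {μ : SignedMeasure E} {a b : Measure E}
    [IsFiniteMeasure a] [IsFiniteMeasure b] (h : μ = a.toSignedMeasure - b.toSignedMeasure)
    {φ : E → ℝ} (hφ : Measurable φ) {C : ℝ} (hb : ∀ x, |φ x| ≤ C) :
    sInt μ φ = ∫ x, φ x ∂a - ∫ x, φ x ∂b := by
  set P := μ.toJordanDecomposition.posPart
  set N := μ.toJordanDecomposition.negPart
  have hPN : P.toSignedMeasure - N.toSignedMeasure = a.toSignedMeasure - b.toSignedMeasure := by
    rw [← h, ← JordanDecomposition.toSignedMeasure, μ.toSignedMeasure_toJordanDecomposition]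
  have hmeas : P + b = a + N := by
    rw [sub_eq_sub_iff_add_eq_add] at hPN
    rw [← Measure.toSignedMeasure_eq_toSignedMeasure_iff, Measure.toSignedMeasure_add,
      Measure.toSignedMeasure_add, hPN, add_comm]
  have hint : ∫ x, φ x ∂(P + b) = ∫ x, φ x ∂(a + N) := by rw [hmeas]
  rw [integral_add_measure (integrable_of_abs_le hφ hb) (integrable_of_abs_le hφ hb),
    integral_add_measure (integrable_of_abs_le hφ hb) (integrable_of_abs_le hφ hb)] at hint
  rw [sInt]
  linarith

lemma sInt_sub_measure (ρ μ : SignedMeasure E) {φ : E → ℝ} (hφ : Measurable φ) {C : ℝ}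
    (hb : ∀ x, |φ x| ≤ C) : sInt (ρ - μ) φ = sInt ρ φ - sInt μ φ := by
  set Pρ := ρ.toJordanDecomposition.posPart
  set Nρ := ρ.toJordanDecomposition.negPart
  set Pμ := μ.toJordanDecomposition.posPart
  set Nμ := μ.toJordanDecomposition.negPart
  have hρ : Pρ.toSignedMeasure - Nρ.toSignedMeasure = ρ := by
    rw [← JordanDecomposition.toSignedMeasure, ρ.toSignedMeasure_toJordanDecomposition]
  have hμ : Pμ.toSignedMeasure - Nμ.toSignedMeasure = μ := by
    rw [← JordanDecomposition.toSignedMeasure, μ.toSignedMeasure_toJordanDecomposition]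
  have hdiff : ρ - μ = (Pρ + Nμ).toSignedMeasure - (Nρ + Pμ).toSignedMeasure := calc
    ρ - μ = (Pρ.toSignedMeasure - Nρ.toSignedMeasure)
        - (Pμ.toSignedMeasure - Nμ.toSignedMeasure) := by rw [hρ, hμ]
    _ = _ := by rw [Measure.toSignedMeasure_add, Measure.toSignedMeasure_add]; abel
  rw [sInt_eq_integral_sub_integral hdiff hφ hb,
    integral_add_measure (integrable_of_abs_le hφ hb) (integrable_of_abs_le hφ hb),
    integral_add_measure (integrable_of_abs_le hφ hb) (integrable_of_abs_le hφ hb), sInt, sInt]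
  ring

lemma sInt_sub (μ : SignedMeasure E) {f g : E → ℝ} (hf : Measurable f) {A : ℝ}
    (hfb : ∀ x, |f x| ≤ A) (hg : Measurable g) {B : ℝ} (hgb : ∀ x, |g x| ≤ B) :
    sInt μ (fun x => f x - g x) = sInt μ f - sInt μ g := by
  simp only [sInt]
  rw [integral_sub (integrable_of_abs_le hf hfb) (integrable_of_abs_le hg hgb),
    integral_sub (integrable_of_abs_le hf hfb) (integrable_of_abs_le hg hgb)]
  ring

lemma sInt_const_mul (μ : SignedMeasure E) (c : ℝ) (f : E → ℝ) :
    sInt μ (fun x => c * f x) = c * sInt μ f := by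
  simp only [sInt, integral_const_mul]
  ring

lemma abs_sInt_le (μ : SignedMeasure E) {φ : E → ℝ} {C : ℝ} (hb : ∀ x, |φ x| ≤ C) :
    |sInt μ φ| ≤ C * μ.totalVariation.real Set.univ := by
  have hbound (m : Measure E) [IsFiniteMeasure m] : |∫ x, φ x ∂m| ≤ C * m.real Set.univ :=
    norm_integral_le_of_norm_le_const (.of_forall fun x => (Real.norm_eq_abs _).trans_le (hb x))
  rw [SignedMeasure.totalVariation, measureReal_add_apply, mul_add, sInt]
  exact (abs_sub _ _).trans (add_le_add (hbound _) (hbound _))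

lemma MeasureTheory.Measure.toSignedMeasure_map {F : Type*} [MeasurableSpace F] (m : Measure E)
    [IsFiniteMeasure m] {f : E → F} (hf : Measurable f) :
    (m.map f).toSignedMeasure = m.toSignedMeasure.map f := by
  ext s hs
  rw [VectorMeasure.map_apply _ hf hs, Measure.toSignedMeasure_apply_measurable hs,
    Measure.toSignedMeasure_apply_measurable (hf hs), map_measureReal_apply hf hs]

end SignedIntegral

section Shift

variable {E : Type*} [MeasurableSpace E] [AddGroup E] [MeasurableAdd E]

lemma shiftSM_eq_sub (μ : SignedMeasure E) (h : E) :
    shiftSM μ h = (μ.toJordanDecomposition.posPart.map (· + h)).toSignedMeasure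
      - (μ.toJordanDecomposition.negPart.map (· + h)).toSignedMeasure := by
  have hmeas : Measurable (· + h : E → E) := measurable_add_const h
  ext s hs
  conv_lhs => rw [shiftSM, ← μ.toSignedMeasure_toJordanDecomposition]
  rw [Measure.toSignedMeasure_map _ hmeas, Measure.toSignedMeasure_map _ hmeas]
  simp only [VectorMeasure.map_apply _ hmeas hs, sub_apply, JordanDecomposition.toSignedMeasure]

lemma sInt_shiftSM (μ : SignedMeasure E) (h : E) {φ : E → ℝ} (hφ : Measurable φ) {C : ℝ}
    (hb : ∀ x, |φ x| ≤ C) : sInt (shiftSM μ h) φ = sInt μ (fun x => φ (x + h)) := by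
  have hmeas : Measurable (· + h : E → E) := measurable_add_const h
  rw [sInt_eq_integral_sub_integral (shiftSM_eq_sub μ h) hφ hb,
    integral_map hmeas.aemeasurable hφ.aestronglyMeasurable,
    integral_map hmeas.aemeasurable hφ.aestronglyMeasurable, sInt]

lemma sInt_shiftSM_sub (μ : SignedMeasure E) (h : E) {φ : E → ℝ} (hφ : Measurable φ) {C : ℝ}
    (hb : ∀ x, |φ x| ≤ C) :
    sInt (shiftSM μ h - μ) φ = sInt μ (fun x => φ (x + h) - φ x) := by
  rw [sInt_sub_measure _ _ hφ hb, sInt_shiftSM _ _ hφ hb,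
    sInt_sub _ (f := fun x => φ (x + h)) (hφ.comp (measurable_add_const h))
      (fun x => hb (x + h)) hφ hb]

end Shift

lemma intervalIntegral_sInt_comm {E : Type*} [TopologicalSpace E] [MeasurableSpace E]
    [OpensMeasurableSpace E] (μ : SignedMeasure E) {F : ℝ → E → ℝ}
    (hF : Continuous (Function.uncurry F)) {C : ℝ} (hb : ∀ s x, |F s x| ≤ C) (a b : ℝ) :
    ∫ s in a..b, sInt μ (F s) = sInt μ (fun x => ∫ s in a..b, F s x) := by
  have hprod (m : Measure E) [IsFiniteMeasure m] :
      Integrable (Function.uncurry F) ((volume.restrict (Set.uIoc a b)).prod m) :=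
    haveI : IsFiniteMeasure (volume.restrict (Set.uIoc a b)) :=
      isFiniteMeasure_restrict.2 (by simp [Real.volume_uIoc])
    .of_bound hF.aestronglyMeasurable C (.of_forall fun p => hb p.1 p.2)
  have hint (m : Measure E) [IsFiniteMeasure m] :
      IntervalIntegrable (fun s => ∫ x, F s x ∂m) volume a b :=
    (intervalIntegrable_iff).2 (hprod m).integral_prod_left
  simp only [sInt]
  rw [intervalIntegral.integral_sub (hint _) (hint _), intervalIntegral_integral_swap (hprod _),
    intervalIntegral_integral_swap (hprod _)]

lemma integral_fderiv_apply_add_smul {E : Type*} [NormedAddCommGroup E] [NormedSpace ℝ E]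
    {φ : E → ℝ} (hφ : ContDiff ℝ 1 φ) (x e : E) (a b : ℝ) :
    ∫ s in a..b, fderiv ℝ φ (x + s • e) e = φ (x + b • e) - φ (x + a • e) := by
  have hline (s : ℝ) : HasDerivAt (fun s : ℝ => x + s • e) e s := by
    simpa using ((hasDerivAt_id s).smul_const e).const_add x
  have hderiv (s : ℝ) : HasDerivAt (fun s => φ (x + s • e)) (fderiv ℝ φ (x + s • e) e) s :=
    ((hφ.differentiable one_ne_zero) _).hasFDerivAt.comp_hasDerivAt s (hline s)
  have hcont : Continuous fun s : ℝ => fderiv ℝ φ (x + s • e) e :=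
    ((hφ.continuous_fderiv one_ne_zero).comp (by fun_prop)).clm_apply continuous_const
  exact intervalIntegral.integral_eq_sub_of_hasDerivAt (fun s _ => hderiv s)
    (hcont.intervalIntegrable a b)

lemma mul_sInt_fderiv_eq {E : Type*} [NormedAddCommGroup E] [NormedSpace ℝ E]
    [MeasurableSpace E] [BorelSpace E] (μ : SignedMeasure E) {φ : E → ℝ} (hφ : ContDiff ℝ 1 φ)
    {e : E} {A B : ℝ} (hφb : ∀ x, |φ x| ≤ A) (hψb : ∀ x, |fderiv ℝ φ x e| ≤ B) (t : ℝ) :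
    t * sInt μ (fun x => fderiv ℝ φ x e) = sInt (shiftSM μ (t • e) - μ) φ
      - ∫ s in 0..t, sInt (shiftSM μ (s • e) - μ) (fun x => fderiv ℝ φ x e) := by
  set ψ : E → ℝ := fun x => fderiv ℝ φ x e
  have hψ : Continuous ψ := (hφ.continuous_fderiv one_ne_zero).clm_apply continuous_const
  have hF : Continuous (Function.uncurry fun (s : ℝ) x => ψ (x + s • e) - ψ x) := by fun_prop
  have hFb (s : ℝ) (x : E) : |ψ (x + s • e) - ψ x| ≤ 2 * B :=
    (abs_sub _ _).trans (by linarith [hψb (x + s • e), hψb x])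
  have hline (x : E) :
      ∫ s in 0..t, (ψ (x + s • e) - ψ x) = (φ (x + t • e) - φ x) - t * ψ x := by
    have hc : Continuous fun s : ℝ => ψ (x + s • e) := by fun_prop
    rw [intervalIntegral.integral_sub (hc.intervalIntegrable 0 t) intervalIntegrable_const,
      integral_fderiv_apply_add_smul hφ, intervalIntegral.integral_const]
    simp
  have hφ' : Continuous fun x => φ (x + t • e) - φ x := by fun_prop
  have hφ'b (x : E) : |φ (x + t • e) - φ x| ≤ 2 * A :=
    (abs_sub _ _).trans (by linarith [hφb (x + t • e), hφb x])
  have htψb (x : E) : |t * ψ x| ≤ |t| * B := by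
    rw [abs_mul]; exact mul_le_mul_of_nonneg_left (hψb x) (abs_nonneg t)
  have key : ∫ s in 0..t, sInt (shiftSM μ (s • e) - μ) ψ
      = sInt (shiftSM μ (t • e) - μ) φ - t * sInt μ ψ := calc
    _ = ∫ s in 0..t, sInt μ (fun x => ψ (x + s • e) - ψ x) := by
      simp_rw [sInt_shiftSM_sub μ _ hψ.measurable hψb]
    _ = sInt μ (fun x => ∫ s in 0..t, (ψ (x + s • e) - ψ x)) :=
      intervalIntegral_sInt_comm μ hF hFb 0 t
    _ = sInt μ (fun x => (φ (x + t • e) - φ x) - t * ψ x) := by simp_rw [hline]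
    _ = _ := by
      rw [sInt_sub μ hφ'.measurable hφ'b (hψ.measurable.const_mul t) htψb, sInt_const_mul,
        sInt_shiftSM_sub μ _ hφ.continuous.measurable hφb]
  linarith

section TotalVariation

variable {k : ℕ}

lemma bddAbove_tvSM_set (ν : SignedMeasure (Ek k)) :
    BddAbove {r | ∃ φ : Ek k → ℝ, ContDiff ℝ (⊤ : ℕ∞) φ ∧ HasCompactSupport φ ∧
      (∀ x, |φ x| ≤ 1) ∧ r = sInt ν φ} := by
  refine ⟨ν.totalVariation.real Set.univ, ?_⟩
  rintro _ ⟨φ, -, -, hb, rfl⟩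
  simpa using (le_abs_self _).trans (abs_sInt_le ν hb)

lemma abs_sInt_le_tvSM (ν : SignedMeasure (Ek k)) {g : Ek k → ℝ}
    (hg : ContDiff ℝ (⊤ : ℕ∞) g) (hgc : HasCompactSupport g) (hb : ∀ x, |g x| ≤ 1) :
    |sInt ν g| ≤ tvSM ν := by
  have hneg : -sInt ν g = sInt ν (fun x => -g x) := by
    simp only [sInt, integral_neg]
    ring
  refine abs_le'.2 ⟨le_csSup (bddAbove_tvSM_set ν) ⟨g, hg, hgc, hb, rfl⟩,
    le_csSup (bddAbove_tvSM_set ν) ⟨fun x => -g x, hg.neg, hgc.neg, fun x => ?_, hneg⟩⟩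
  simpa using hb x

lemma tvSM_nonneg (ν : SignedMeasure (Ek k)) : 0 ≤ tvSM ν := by
  simpa [sInt] using abs_sInt_le_tvSM ν (g := 0) contDiff_const HasCompactSupport.zero (by simp)

lemma abs_sInt_le_mul_tvSM (ν : SignedMeasure (Ek k)) {g : Ek k → ℝ}
    (hg : ContDiff ℝ (⊤ : ℕ∞) g) (hgc : HasCompactSupport g) {c : ℝ} (hc : 0 < c)
    (hb : ∀ x, |g x| ≤ c) : |sInt ν g| ≤ c * tvSM ν := by
  have hscaled : |sInt ν (fun x => c⁻¹ * g x)| ≤ tvSM ν := by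
    refine abs_sInt_le_tvSM ν (contDiff_const.mul hg) (hgc.mul_left) fun x => ?_
    rw [abs_mul, abs_of_pos (inv_pos.2 hc), inv_mul_le_iff₀ hc, mul_one]
    exact hb x
  rwa [sInt_const_mul, abs_mul, abs_of_pos (inv_pos.2 hc), inv_mul_le_iff₀ hc] at hscaled

lemma tvSM_shiftSM_sub_le (μ : SignedMeasure (Ek k)) (h : Ek k) :
    tvSM (shiftSM μ h - μ) ≤ 2 * μ.totalVariation.real Set.univ := by
  refine Real.sSup_le ?_ (by positivity)
  rintro _ ⟨φ, hφ, -, hb, rfl⟩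
  have hdiff (x : Ek k) : |φ (x + h) - φ x| ≤ 2 :=
    (abs_sub _ _).trans (by linarith [hb (x + h), hb x])
  rw [sInt_shiftSM_sub μ h hφ.continuous.measurable hb]
  exact (le_abs_self _).trans (abs_sInt_le μ hdiff)

end TotalVariation

lemma sInt_fderiv_le_two_mul {k : ℕ} (μ : SignedMeasure (Ek k)) {t S : ℝ} (ht : 0 < t)
    (hS : ∀ h : Ek k, ‖h‖ ≤ t → tvSM (shiftSM μ h - μ) ≤ S) {φ : Ek k → ℝ} {e : Ek k}
    (hφ : ContDiff ℝ (⊤ : ℕ∞) φ) (hφc : HasCompactSupport φ) (he : ‖e‖ = 1)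
    (hφt : ∀ x, |φ x| ≤ t) (hψ : ∀ x, |fderiv ℝ φ x e| ≤ 1) :
    sInt μ (fun x => fderiv ℝ φ x e) ≤ 2 * S := by
  have hψ_smooth : ContDiff ℝ (⊤ : ℕ∞) fun x => fderiv ℝ φ x e :=
    (hφ.fderiv_right (by simp)).clm_apply contDiff_const
  have hshift {s : ℝ} (hs : |s| ≤ t) : ‖s • e‖ ≤ t := by rwa [norm_smul, he, mul_one]
  have hend : |sInt (shiftSM μ (t • e) - μ) φ| ≤ t * S :=
    (abs_sInt_le_mul_tvSM _ hφ hφc ht hφt).trans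
      (mul_le_mul_of_nonneg_left (hS _ (hshift (abs_of_pos ht).le)) ht.le)
  have hmid :
      |∫ s in 0..t, sInt (shiftSM μ (s • e) - μ) (fun x => fderiv ℝ φ x e)| ≤ S * t := by
    have hbound := intervalIntegral.norm_integral_le_of_norm_le_const (C := S)
      (f := fun s => sInt (shiftSM μ (s • e) - μ) (fun x => fderiv ℝ φ x e)) fun s hs => by
      rw [Set.uIoc_of_le ht.le] at hs
      exact (abs_sInt_le_tvSM _ hψ_smooth (hφc.fderiv_apply ℝ e) hψ).trans
        (hS _ (hshift ((abs_of_pos hs.1).trans_le hs.2)))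
    rwa [sub_zero, abs_of_pos ht] at hbound
  have hid := mul_sInt_fderiv_eq μ (hφ.of_le (by simp)) hφt hψ t
  refine le_of_mul_le_mul_left ?_ ht
  linarith [(abs_le.1 hend).2, (abs_le.1 hmid).1]

theorem stmt5 {k : ℕ} (μ : SignedMeasure (Ek k)) (t : ℝ) (ht : 0 < t) :
    sigmaSM μ t ≤ 6 * k * sSup {r | ∃ h : Ek k, ‖h‖ ≤ t ∧ r = tvSM (shiftSM μ h - μ)} := by
  set R := {r | ∃ h : Ek k, ‖h‖ ≤ t ∧ r = tvSM (shiftSM μ h - μ)}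
  have hR : BddAbove R :=
    ⟨2 * μ.totalVariation.real Set.univ, by rintro _ ⟨h, -, rfl⟩; exact tvSM_shiftSM_sub_le μ h⟩
  have hS (h : Ek k) (hh : ‖h‖ ≤ t) : tvSM (shiftSM μ h - μ) ≤ sSup R := le_csSup hR ⟨h, hh, rfl⟩
  have hS0 : 0 ≤ sSup R := (tvSM_nonneg _).trans (hS 0 (by simpa using ht.le))
  refine Real.sSup_le ?_ (by positivity)
  rintro _ ⟨φ, e, hφ, hφc, he, hφt, hψ, rfl⟩
  have hk : (1 : ℝ) ≤ k := by
    have : k ≠ 0 := by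
      rintro rfl
      simp [Subsingleton.elim e 0] at he
    exact_mod_cast Nat.one_le_iff_ne_zero.2 this
  calc sInt μ (fun x => fderiv ℝ φ x e) ≤ 2 * sSup R :=
        sInt_fderiv_le_two_mul μ ht hS hφ hφc he hφt hψ
    _ ≤ 6 * k * sSup R := by nlinarith
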